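/- Let w₁ = 012021020102120102012021020102101202120121020102120210, w₂ = τ(w₁), w₃ = τ²(w₁), where τ is the letter permutation 0→1,1→2,2→0. Then each wᵢ is a squarefree ternary word of length 54, and for every squarefree word i₁i₂i₃ over {0,1,2}, the concatenation w_{i₁+1} w_{i₂+1} w_{i₃+1} is squarefree; i.e., {{w₁},{w₂},{w₃}} is a 54-Brinkhuis 1-triple (w₁ is admissible). -/
import Mathlib

/-- A word is squarefree if it contains no factor `x ++ x` with `x` nonempty. -/
def IsSquarefreeWord {α : Type*} (w : List α) : Prop :=
  ∀ x : List α, x ≠ [] → ¬ ∃ a b : List α, w = a ++ x ++ x ++ b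

/-- The cyclic permutation 0 → 1 → 2 → 0 on the ternary alphabet. -/
def tau : Fin 3 → Fin 3
  | 0 => 1
  | 1 => 2
  | 2 => 0

/-- The word 012021020102120102012021020102101202120121020102120210. -/
def w1 : List (Fin 3) :=
  [0, 1, 2, 0, 2, 1, 0, 2, 0, 1, 0, 2, 1, 2, 0, 1, 0, 2, 0, 1, 2, 0, 2, 1, 0,
   2, 0, 1, 0, 2, 1, 0, 1, 2, 0, 2, 1, 2, 0, 1, 2, 1, 0, 2, 0, 1, 0, 2, 1, 2,
   0, 2, 1, 0]

/-- The triple `{w₁, τ(w₁), τ²(w₁)}` indexed by the letter each word represents. -/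
def W : Fin 3 → List (Fin 3)
  | 0 => w1
  | 1 => w1.map tau
  | 2 => (w1.map tau).map tau

/-- Boolean check for the existence of a square factor. -/
def hasSquare (w : List (Fin 3)) : Bool :=
  (List.range w.length).any fun i =>
    (List.range (w.length / 2)).any fun lm =>
      decide (i + 2 * (lm + 1) ≤ w.length) &&
        decide ((w.drop i).take (lm + 1) = (w.drop (i + (lm + 1))).take (lm + 1))

lemma sqf_of_hasSquare (w : List (Fin 3)) (h : hasSquare w = false) :
    IsSquarefreeWord w := by
  intro x hx ⟨a, b, hw⟩
  have hl : 0 < x.length := List.length_pos_iff.mpr hx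
  have hw' : w = (a ++ x) ++ (x ++ b) := by
    rw [hw]; simp [List.append_assoc]
  have hn : w.length = a.length + 2 * x.length + b.length := by
    rw [hw']; simp [List.length_append]; omega
  have htrue : hasSquare w = true := by
    rw [hasSquare, List.any_eq_true]
    refine ⟨a.length, List.mem_range.mpr (by omega), ?_⟩
    rw [List.any_eq_true]
    refine ⟨x.length - 1, List.mem_range.mpr (by omega), ?_⟩
    have hx1 : x.length - 1 + 1 = x.length := by omega
    rw [hx1, Bool.and_eq_true, decide_eq_true_iff, decide_eq_true_iff]
    constructor
    · omega
    · have h1 : w.drop a.length = x ++ (x ++ b) := by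
        rw [hw]; simp [List.append_assoc, List.drop_left]
      have h2 : w.drop (a.length + x.length) = x ++ b := by
        have : a.length + x.length = (a ++ x).length := by simp
        rw [hw', this, List.drop_left]
      rw [h1, h2, List.take_left' rfl, List.take_left' rfl]
  rw [h] at htrue; exact Bool.false_ne_true htrue

lemma not_sqf_left (c : Fin 3) (d : Fin 3) : ¬ IsSquarefreeWord [c, c, d] :=
  fun h => h [c] (by simp) ⟨[], [d], rfl⟩

lemma not_sqf_right (c : Fin 3) (d : Fin 3) : ¬ IsSquarefreeWord [d, c, c] :=
  fun h => h [c] (by simp) ⟨[d], [], rfl⟩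

/-- Squarefreeness is preserved by injective letter maps. -/
lemma sqf_map {α β : Type*} {f : α → β} (hf : Function.Injective f)
    {w : List α} (h : IsSquarefreeWord w) : IsSquarefreeWord (w.map f) := by
  intro x hx ⟨a, b, hw⟩
  rw [List.append_assoc, List.append_assoc, eq_comm, List.append_eq_map_iff] at hw
  obtain ⟨a', r, rfl, ha', hr⟩ := hw
  rw [eq_comm, List.append_eq_map_iff] at hr
  obtain ⟨x₁, r₂, rfl, hx₁, hr₂⟩ := hr
  rw [eq_comm, List.append_eq_map_iff] at hr₂
  obtain ⟨x₂, b', rfl, hx₂, hb'⟩ := hr₂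
  have hxx : x₁ = x₂ := List.map_injective_iff.mpr hf (hx₁.trans hx₂.symm)
  have hx₁ne : x₁ ≠ [] := by
    intro hnil; apply hx; rw [← hx₁, hnil]; rfl
  exact h x₁ hx₁ne ⟨a', b', by rw [List.append_assoc, List.append_assoc, hxx]⟩

lemma tau_inj : Function.Injective tau := by decide

lemma W_succ : ∀ i : Fin 3, W (i + 1) = (W i).map tau := by decide

lemma sqf_W_shift {i₁ i₂ i₃ : Fin 3}
    (h : IsSquarefreeWord (W i₁ ++ W i₂ ++ W i₃)) :
    IsSquarefreeWord (W (i₁ + 1) ++ W (i₂ + 1) ++ W (i₃ + 1)) := by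
  rw [W_succ, W_succ, W_succ, ← List.map_append, ← List.map_append]
  exact sqf_map tau_inj h

set_option maxRecDepth 100000 in
lemma sqf_w1 : IsSquarefreeWord (W 0) :=
  sqf_of_hasSquare _ (by decide)

set_option maxRecDepth 100000 in
set_option maxHeartbeats 1000000 in
lemma sqf_010 : IsSquarefreeWord (W 0 ++ W 1 ++ W 0) :=
  sqf_of_hasSquare _ (by decide)

set_option maxRecDepth 100000 in
set_option maxHeartbeats 1000000 in
lemma sqf_012 : IsSquarefreeWord (W 0 ++ W 1 ++ W 2) :=
  sqf_of_hasSquare _ (by decide)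

set_option maxRecDepth 100000 in
set_option maxHeartbeats 1000000 in
lemma sqf_020 : IsSquarefreeWord (W 0 ++ W 2 ++ W 0) :=
  sqf_of_hasSquare _ (by decide)

set_option maxRecDepth 100000 in
set_option maxHeartbeats 1000000 in
lemma sqf_021 : IsSquarefreeWord (W 0 ++ W 2 ++ W 1) :=
  sqf_of_hasSquare _ (by decide)

theorem w1_is_admissible :
    (∀ i : Fin 3, (W i).length = 54 ∧ IsSquarefreeWord (W i)) ∧
    (∀ i₁ i₂ i₃ : Fin 3, IsSquarefreeWord [i₁, i₂, i₃] →
      IsSquarefreeWord (W i₁ ++ W i₂ ++ W i₃)) := by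
  have h1 : IsSquarefreeWord (W 1) := by
    exact sqf_map tau_inj sqf_w1
  have h2 : IsSquarefreeWord (W 2) := by
    exact sqf_map tau_inj h1
  constructor
  · intro i
    fin_cases i
    · exact ⟨by decide, sqf_w1⟩
    · exact ⟨by decide, h1⟩
    · exact ⟨by decide, h2⟩
  · intro i₁ i₂ i₃ h
    fin_cases i₁ <;> fin_cases i₂ <;> fin_cases i₃ <;>
      first
        | exact absurd h (not_sqf_left _ _)
        | exact absurd h (not_sqf_right _ _)
        | exact sqf_010
        | exact sqf_012
        | exact sqf_020
        | exact sqf_021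
        | exact sqf_W_shift sqf_010
        | exact sqf_W_shift sqf_012
        | exact sqf_W_shift sqf_020
        | exact sqf_W_shift sqf_021
        | exact sqf_W_shift (sqf_W_shift sqf_010)
        | exact sqf_W_shift (sqf_W_shift sqf_012)
        | exact sqf_W_shift (sqf_W_shift sqf_020)
        | exact sqf_W_shift (sqf_W_shift sqf_021)
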